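/- arXiv:2002.09622 — 3 statements merged into one kernel-verified Lean document; each statement's English description precedes it below -/
import Mathlib

section
/- Let M = (S,N,V) be a neighborhood model and for each w let Σ_w ⊆ {X ⊆ S | w ∈ X}. Define N⁺(w) = N(w) ∪ Σ_w and N⁻(w) = N(w) \ Σ_w. Then for every w ∈ S and every L(W)-formula α: M,w ⊨ α iff (S,N⁺,V),w ⊨ α, and M,w ⊨ α iff (S,N⁻,V),w ⊨ α. -/
structure NModel (S : Type) where
  N : S → Set (Set S)
  V : ℕ → Set S

/-- The language L(W). -/
inductive Form : Type where
  | atom : ℕ → Form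
  | neg : Form → Form
  | and : Form → Form → Form
  | w : Form → Form

def sat {S : Type} (M : NModel S) : S → Form → Prop
  | s, .atom p => s ∈ M.V p
  | s, .neg φ => ¬ sat M s φ
  | s, .and φ ψ => sat M s φ ∧ sat M s ψ
  | s, .w φ => {x | sat M x φ} ∈ M.N s ∧ ¬ sat M s φ

/-! `W φ` consults the neighborhood `⟦φ⟧ ∈ N w` only when `w ∉ ⟦φ⟧`, so by induction on formulas
truth is unchanged by any modification of `N w` among sets containing `w`. -/

theorem sat_iff_of_nbhd_iff_of_not_mem {S : Type} {N N' : S → Set (Set S)} {V : ℕ → Set S}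
    (hN : ∀ w X, w ∉ X → (X ∈ N w ↔ X ∈ N' w)) (w : S) (α : Form) :
    sat ⟨N, V⟩ w α ↔ sat ⟨N', V⟩ w α := by
  induction α generalizing w with
  | atom p => rfl
  | neg φ ih => exact not_congr (ih w)
  | and φ ψ ihφ ihψ => exact and_congr (ihφ w) (ihψ w)
  | w φ ih =>
    show _ ∧ _ ↔ _ ∧ _
    rw [Set.ext ih, ih w]
    exact and_congr_left fun hw => hN w _ hw

/-- Adding or removing neighborhoods containing the evaluation point does not affect
truth of L(W)-formulas. -/
theorem w_invariance_add_remove {S : Type} (N : S → Set (Set S)) (V : ℕ → Set S)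
    (Sig : S → Set (Set S)) (hSig : ∀ w, ∀ X ∈ Sig w, w ∈ X) :
    ∀ (w : S) (α : Form),
      (sat ⟨N, V⟩ w α ↔ sat ⟨fun x => N x ∪ Sig x, V⟩ w α) ∧
      (sat ⟨N, V⟩ w α ↔ sat ⟨fun x => N x \ Sig x, V⟩ w α) :=
  fun w α =>
    ⟨sat_iff_of_nbhd_iff_of_not_mem
        (fun x X hx => (or_iff_left fun h => hx (hSig x X h)).symm) w α,
      sat_iff_of_nbhd_iff_of_not_mem
        (fun x X hx => (and_iff_left fun h => hx (hSig x X h)).symm) w α⟩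
end

section
/- The frame property of closure under binary intersections (c) is not definable in L(W): there exist frames F and F' with F satisfying (c), F' not, such that F and F' validate exactly the same L(W)-formulas. -/
def frameValid {S : Type} (N : S → Set (Set S)) (φ : Form) : Prop :=
  ∀ (V : ℕ → Set S) (s : S), sat ⟨N, V⟩ s φ

/-- Closure under binary intersections. -/
def closedInterFrame {S : Type} (N : S → Set (Set S)) : Prop :=
  ∀ s (X Y : Set S), X ∈ N s → Y ∈ N s → X ∩ Y ∈ N s

/-!
`W φ` at `s` only inspects neighbourhoods of `s` that omit `s`. So two frames agreeing on such
neighbourhoods validate the same formulas. The empty neighbourhood function is trivially closed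
under intersections, while `s ↦ {X | {s} ⊂ X}` has no neighbourhood omitting its point, yet on
three points `{a, b} ∩ {a, c} = {a}` is not a neighbourhood of `a`.
-/

theorem sat_congr_of_forall_notMem {S : Type} {N N' : S → Set (Set S)}
    (h : ∀ s X, s ∉ X → (X ∈ N s ↔ X ∈ N' s)) (V : ℕ → Set S) (φ : Form) (s : S) :
    sat ⟨N, V⟩ s φ ↔ sat ⟨N', V⟩ s φ := by
  induction φ generalizing s with
  | atom p => rfl
  | neg φ ih => simp only [sat, ih]
  | and φ ψ ihφ ihψ => simp only [sat, ihφ, ihψ]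
  | w φ ih =>
    have hext : {x | sat ⟨N, V⟩ x φ} = {x | sat ⟨N', V⟩ x φ} := Set.ext ih
    show _ ∧ _ ↔ _ ∧ _
    rw [hext, ih s]
    exact and_congr_left fun hs => h s _ hs

theorem frameValid_congr_of_forall_notMem {S : Type} {N N' : S → Set (Set S)}
    (h : ∀ s X, s ∉ X → (X ∈ N s ↔ X ∈ N' s)) (φ : Form) :
    frameValid N φ ↔ frameValid N' φ :=
  forall_congr' fun V => forall_congr' fun s => sat_congr_of_forall_notMem h V φ s

theorem closedInterFrame_empty (S : Type) : closedInterFrame (fun _ : S => ∅) :=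
  fun _ X _ hX _ => absurd hX (Set.notMem_empty X)

theorem not_closedInterFrame_ssupersets_singleton {S : Type} {a b c : S}
    (hab : a ≠ b) (hac : a ≠ c) (hbc : b ≠ c) :
    ¬ closedInterFrame (fun s : S => {X | {s} ⊂ X}) := by
  intro hclosed
  have hb : {a} ⊂ ({a, b} : Set S) := by rw [Set.pair_comm]; exact Set.ssubset_insert hab.symm
  have hc : {a} ⊂ ({a, c} : Set S) := by rw [Set.pair_comm]; exact Set.ssubset_insert hac.symm
  have hinter : ({a, b} ∩ {a, c} : Set S) = {a} := by
    rw [← Set.insert_inter_distrib, (Set.singleton_inter_eq_empty (s := {c})).2 hbc,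
      insert_empty_eq]
  have hmem := hclosed a _ _ hb hc
  rw [hinter] at hmem
  exact lt_irrefl ({a} : Set S) hmem

/-- Property (c) is not definable in L(W): there are frames F (with (c)) and F'
(without (c)) validating exactly the same L(W)-formulas. -/
theorem c_undefinable_in_w :
    ∃ (S S' : Type) (_ : Nonempty S) (_ : Nonempty S')
      (N : S → Set (Set S)) (N' : S' → Set (Set S')),
      closedInterFrame N ∧ ¬ closedInterFrame N' ∧
      (∀ φ : Form, frameValid N φ ↔ frameValid N' φ) := by
  refine ⟨Fin 3, Fin 3, ⟨0⟩, ⟨0⟩, fun _ => ∅, fun s => {X | {s} ⊂ X},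
    closedInterFrame_empty _,
    not_closedInterFrame_ssupersets_singleton (a := 0) (b := 1) (c := 2)
      (by decide) (by decide) (by decide),
    frameValid_congr_of_forall_notMem ?_⟩
  intro s X hs
  refine iff_of_false (Set.notMem_empty X) fun hX : {s} ⊂ X => hs ?_
  exact Set.singleton_subset_iff.1 hX.subset
end

section
/- Let M be a neighborhood model and M^tc its transitive closure. Then for all states w and all L(W)-formulas φ: M,w ⊨ φ iff M^tc,w ⊨ φ. -/
/-- `m_{N}(X) = {z | X ∈ N(z)}`. -/
def mN {S : Type} (N : S → Set (Set S)) (X : Set S) : Set S := {z | X ∈ N z}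

/-- The iterated neighborhood functions `N_i`. -/
def Niter {S : Type} (N : S → Set (Set S)) : ℕ → S → Set (Set S)
  | 0 => N
  | i + 1 => fun w => Niter N i w ∪ (fun X => mN (Niter N i) X) '' Niter N i w

/-- The transitive closure `N^tc = ⋃_i N_i`. -/
def Ntc {S : Type} (N : S → Set (Set S)) (w : S) : Set (Set S) := ⋃ i, Niter N i w

section

variable {S : Type}

theorem sat_iff_sat_of_subset_of_mem {N N' : S → Set (Set S)} (V : ℕ → Set S)
    (hsub : ∀ w, N w ⊆ N' w) (hnew : ∀ w X, X ∈ N' w → X ∉ N w → w ∈ X) :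
    ∀ (w : S) (φ : Form), sat ⟨N, V⟩ w φ ↔ sat ⟨N', V⟩ w φ := by
  intro w φ
  induction φ generalizing w with
  | atom p => rfl
  | neg φ ih => exact not_congr (ih w)
  | and φ ψ ihφ ihψ => exact and_congr (ihφ w) (ihψ w)
  | w φ ih =>
    have htruth : {x | sat ⟨N, V⟩ x φ} = {x | sat ⟨N', V⟩ x φ} := Set.ext ih
    change _ ∈ N w ∧ _ ↔ _ ∈ N' w ∧ _
    rw [htruth, ih w]
    refine ⟨fun ⟨hX, hw⟩ => ⟨hsub w (htruth ▸ hX), hw⟩, fun ⟨hX, hw⟩ => ⟨?_, hw⟩⟩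
    by_contra hX'
    exact hw (hnew w _ hX (htruth ▸ hX'))

theorem mem_of_mem_Niter_of_notMem (N : S → Set (Set S)) {i : ℕ} {w : S} {X : Set S}
    (h : X ∈ Niter N i w) (hX : X ∉ N w) : w ∈ X := by
  induction i with
  | zero => exact absurd h hX
  | succ i ih =>
    rcases h with h | ⟨Y, hY, rfl⟩
    · exact ih h
    · exact hY

theorem mem_of_mem_Ntc_of_notMem (N : S → Set (Set S)) {w : S} {X : Set S}
    (h : X ∈ Ntc N w) (hX : X ∉ N w) : w ∈ X :=
  let ⟨_, hi⟩ := Set.mem_iUnion.1 h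
  mem_of_mem_Niter_of_notMem N hi hX

theorem subset_Ntc (N : S → Set (Set S)) (w : S) : N w ⊆ Ntc N w :=
  Set.subset_iUnion (fun i => Niter N i w) 0

end

/-- L(W)-formulas are invariant under transitive closure of neighborhood models. -/
theorem w_invariant_transitive_closure {S : Type} (N : S → Set (Set S)) (V : ℕ → Set S) :
    ∀ (w : S) (φ : Form), sat ⟨N, V⟩ w φ ↔ sat ⟨Ntc N, V⟩ w φ :=
  sat_iff_sat_of_subset_of_mem V (subset_Ntc N) fun _ _ => mem_of_mem_Ntc_of_notMem N
end
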